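/- Symbolic Completeness Theorem: Let PT = (P, I, A) be a monotonic planning task with I = ∅, T ⊆ Events* a prefix-closed set of traces, and Σ∩ ⊆ P ∩ Events. Assume: (SC1) each action has a singleton postcondition; (SC4') for every action (pre, {c}) with c ∈ Σ∩, pre ⊆ Σ∩; (C1, liveness) for every t ∈ T and every action (pre, {c}) ∈ A with c ∈ Σ∩ and pre contained in the set of elements of t, there exists an extension t' = t ++ t_r ∈ T with set(t_r) ∩ Σ∩ = {c}. Then PT is symbolically complete with respect to T: for every planning trace pt of PT there exists a trace t ∈ T with pt|Σ∩ = t|Σ∩ — provided additionally that all propositions appearing in planning traces are in Σ∩ (e.g., P = Σ∩) and the empty trace is in T. -/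

import Mathlib

/-!
Replay the planning trace one action `(pre, {c})` at a time while building a protocol trace
`t ∈ T`, keeping the invariant that every proposition of `Σ∩` reached so far occurs in `t`.
By SC4' the preconditions lie in `Σ∩`, hence occur in `t`, so liveness extends `t` by a segment
whose only `Σ∩`-event is `c`. Cutting that segment just after the first `Σ∩`-event (allowed by
prefix-closedness) contributes exactly `c` to `t|Σ∩`.
-/

noncomputable def restr {α : Type*} (S : Set α) (l : List α) : List α :=
  l.filter (fun x => @decide (x ∈ S) (Classical.propDecidable _))

inductive PTrace {α : Type*} (A : Set (Set α × Set α)) :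
    Set α → List α → Set α → Prop
  | nil (σ : Set α) : PTrace A σ [] σ
  | cons {σ σ' : Set α} {pre : Set α} {c : α} {tr : List α}
      (ha : (pre, ({c} : Set α)) ∈ A) (hpre : pre ⊆ σ)
      (h : PTrace A (σ ∪ {c}) tr σ') : PTrace A σ (c :: tr) σ'

section Restr

variable {α : Type*} {S : Set α}

@[simp]
lemma restr_nil : restr S ([] : List α) = [] := rfl

@[simp]
lemma mem_restr {x : α} {l : List α} : x ∈ restr S l ↔ x ∈ l ∧ x ∈ S := by
  simp [restr]

lemma restr_cons_of_mem {c : α} (hc : c ∈ S) (l : List α) :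
    restr S (c :: l) = c :: restr S l := by
  simp [restr, hc]

lemma restr_cons_of_not_mem {c : α} (hc : c ∉ S) (l : List α) :
    restr S (c :: l) = restr S l := by
  simp [restr, hc]

@[simp]
lemma restr_append (l₁ l₂ : List α) : restr S (l₁ ++ l₂) = restr S l₁ ++ restr S l₂ :=
  List.filter_append _ _

lemma exists_prefix_restr_eq_singleton {c : α} :
    ∀ {l r : List α}, restr S l = c :: r → ∃ l', l' <+: l ∧ restr S l' = [c]
  | [], _, h => by simp at h
  | a :: l, r, h => by
    by_cases ha : a ∈ S
    · rw [restr_cons_of_mem ha, List.cons.injEq] at h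
      exact ⟨[a], List.prefix_cons_inj a |>.mpr List.nil_prefix, by
        rw [restr_cons_of_mem ha, h.1, restr_nil]⟩
    · rw [restr_cons_of_not_mem ha] at h
      obtain ⟨l', hl', hres⟩ := exists_prefix_restr_eq_singleton h
      exact ⟨a :: l', (List.prefix_cons_inj a).mpr hl', by rw [restr_cons_of_not_mem ha, hres]⟩

lemma exists_restr_eq_cons_of_inter_eq_singleton {c : α} {l : List α}
    (h : {x | x ∈ l} ∩ S = {c}) : ∃ r, restr S l = c :: r := by
  have hc : c ∈ restr S l := mem_restr.mpr (h.symm ▸ rfl : c ∈ {x | x ∈ l} ∩ S)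
  cases hr : restr S l with
  | nil => simp [hr] at hc
  | cons d r =>
    have hd : d ∈ {x | x ∈ l} ∩ S := mem_restr.mp (hr ▸ List.mem_cons_self)
    rw [h] at hd
    exact ⟨r, by rw [hd]⟩

end Restr

section Completeness

variable {α : Type*} {A : Set (Set α × Set α)} {T : Set (List α)} {Scap : Set α}

lemma exists_append_mem_restr_eq_singleton
    (hprefix : ∀ t ∈ T, ∀ t' : List α, t' <+: t → t' ∈ T)
    (hC1 : ∀ t ∈ T, ∀ (pre : Set α) (c : α), (pre, ({c} : Set α)) ∈ A →
      c ∈ Scap → (∀ p ∈ pre, p ∈ t) →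
      ∃ tr : List α, (t ++ tr) ∈ T ∧ {x | x ∈ tr} ∩ Scap = {c})
    {t : List α} (ht : t ∈ T) {pre : Set α} {c : α} (ha : (pre, ({c} : Set α)) ∈ A)
    (hc : c ∈ Scap) (hpre : ∀ p ∈ pre, p ∈ t) :
    ∃ tr, t ++ tr ∈ T ∧ restr Scap tr = [c] := by
  obtain ⟨tr, htr, hinter⟩ := hC1 t ht pre c ha hc hpre
  obtain ⟨r, hr⟩ := exists_restr_eq_cons_of_inter_eq_singleton hinter
  obtain ⟨tr', ⟨s, rfl⟩, hres⟩ := exists_prefix_restr_eq_singleton hr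
  exact ⟨tr', hprefix _ htr _ ⟨s, List.append_assoc _ _ _⟩, hres⟩

lemma PTrace.exists_mem_restr_eq_append
    (hSC4 : ∀ (pre : Set α) (c : α), (pre, ({c} : Set α)) ∈ A → c ∈ Scap →
      pre ⊆ Scap)
    (hprefix : ∀ t ∈ T, ∀ t' : List α, t' <+: t → t' ∈ T)
    (hpost : ∀ (pre : Set α) (c : α), (pre, ({c} : Set α)) ∈ A → c ∈ Scap)
    (hC1 : ∀ t ∈ T, ∀ (pre : Set α) (c : α), (pre, ({c} : Set α)) ∈ A →
      c ∈ Scap → (∀ p ∈ pre, p ∈ t) →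
      ∃ tr : List α, (t ++ tr) ∈ T ∧ {x | x ∈ tr} ∩ Scap = {c})
    {σ σ' : Set α} {pt : List α} (hpt : PTrace A σ pt σ') :
    ∀ t ∈ T, σ ∩ Scap ⊆ {x | x ∈ t} →
      ∃ t' ∈ T, restr Scap t' = restr Scap t ++ restr Scap pt := by
  induction hpt with
  | nil σ => exact fun t ht _ => ⟨t, ht, by simp⟩
  | @cons σ σ' pre c pt ha hpre _ ih =>
    intro t ht hσt
    have hc : c ∈ Scap := hpost _ _ ha
    have hpret : ∀ p ∈ pre, p ∈ t := fun p hp => hσt ⟨hpre hp, hSC4 _ _ ha hc hp⟩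
    obtain ⟨tr, htr, hres⟩ := exists_append_mem_restr_eq_singleton hprefix hC1 ht ha hc hpret
    have hctr : c ∈ tr := (mem_restr.mp (hres ▸ List.mem_singleton_self c)).1
    have hσc : (σ ∪ {c}) ∩ Scap ⊆ {x | x ∈ t ++ tr} := by
      rintro x ⟨hx | rfl, hxS⟩
      · exact List.mem_append_left _ (hσt ⟨hx, hxS⟩)
      · exact List.mem_append_right _ hctr
    obtain ⟨t', ht', heq⟩ := ih (t ++ tr) htr hσc
    exact ⟨t', ht', by rw [heq, restr_append, hres, restr_cons_of_mem hc, List.append_assoc,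
      List.singleton_append]⟩

end Completeness

theorem symbolic_completeness_general {α : Type*} (A : Set (Set α × Set α))
    (T : Set (List α)) (Scap : Set α)
    (hSC4 : ∀ (pre : Set α) (c : α), (pre, ({c} : Set α)) ∈ A → c ∈ Scap →
      pre ⊆ Scap)
    (hprefix : ∀ t ∈ T, ∀ t' : List α, t' <+: t → t' ∈ T)
    (hempty : ([] : List α) ∈ T)
    (hpost : ∀ (pre : Set α) (c : α), (pre, ({c} : Set α)) ∈ A → c ∈ Scap)
    (hC1 : ∀ t ∈ T, ∀ (pre : Set α) (c : α), (pre, ({c} : Set α)) ∈ A →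
      c ∈ Scap → (∀ p ∈ pre, p ∈ t) →
      ∃ tr : List α, (t ++ tr) ∈ T ∧ {x | x ∈ tr} ∩ Scap = {c}) :
    ∀ (pt : List α) (σ : Set α), PTrace A ∅ pt σ →
      ∃ t ∈ T, restr Scap pt = restr Scap t := by
  intro pt σ hpt
  obtain ⟨t, ht, heq⟩ :=
    hpt.exists_mem_restr_eq_append hSC4 hprefix hpost hC1 [] hempty (by simp)
  exact ⟨t, ht, by simpa using heq.symm⟩

/-- Symbolic Completeness: under SC1, SC4', the liveness
condition C1, prefix-closedness of `T`, the empty trace being in `T`, and all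
propositions appearing in planning traces (i.e. all postconditions) being in
`Σ∩`, every planning trace `pt` of `(P, ∅, A)` has a protocol trace `t ∈ T`
with `pt|Σ∩ = t|Σ∩`. -/
theorem symbolic_completeness {α : Type*} (A : Set (Set α × Set α))
    (T : Set (List α)) (Scap : Set α)
    (hSC1 : ∀ a ∈ A, ∃ c : α, a.2 = {c})
    (hSC4 : ∀ (pre : Set α) (c : α), (pre, ({c} : Set α)) ∈ A → c ∈ Scap →
      pre ⊆ Scap)
    (hprefix : ∀ t ∈ T, ∀ t' : List α, t' <+: t → t' ∈ T)
    (hempty : ([] : List α) ∈ T)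
    (hpost : ∀ (pre : Set α) (c : α), (pre, ({c} : Set α)) ∈ A → c ∈ Scap)
    (hC1 : ∀ t ∈ T, ∀ (pre : Set α) (c : α), (pre, ({c} : Set α)) ∈ A →
      c ∈ Scap → (∀ p ∈ pre, p ∈ t) →
      ∃ tr : List α, (t ++ tr) ∈ T ∧ {x | x ∈ tr} ∩ Scap = {c}) :
    ∀ (pt : List α) (σ : Set α), PTrace A ∅ pt σ →
      ∃ t ∈ T, restr Scap pt = restr Scap t :=
  symbolic_completeness_general A T Scap hSC4 hprefix hempty hpost hC1
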